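/- Under assumptions (A1)–(A3) and full-batch inference with shared parameters, for every client c, every owned node v ∈ V_c^own, and every layer index l with 0 ≤ l ≤ L, the locally computed representation equals the centralized one: h_{v,c}^{(l)} = h_v^{(l,cent)}. -/
import Mathlib


/-- **Expressivity equivalence (Theorem 1).**
Under (A1)–(A3) and full-batch inference with shared parameters, for every client `c`,
every owned node `v ∈ V_c^own`, and every layer `l ≤ L`, the locally computed
representation equals the centralized one: `h_{v,c}^{(l)} = h_v^{(l,cent)}`. -/
theorem expressivity_equivalence
    {V : Type*} [Fintype V] [DecidableEq V]
    {C : Type*}                                  -- client indices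
    {d d' de : ℕ}
    {M A : Type*}                                -- message space, aggregate space
    (N : V → Finset V)                           -- neighbor function 𝒩
    (x : V → EuclideanSpace ℝ (Fin d))           -- node features
    (e : V → V → EuclideanSpace ℝ (Fin de))      -- edge features e_{uv}
    (own : C → Set V)                            -- owned node sets V_c^own
    (hdisj : Pairwise (Function.onFun Disjoint own))
    (hcover : (⋃ c, own c) = Set.univ)
    (rem : C → Set V)                            -- remote node sets V_c^rem
    (hrem : ∀ c, rem c = (⋃ v ∈ own c, (N v : Set V)) \ own c)
    (L : ℕ)                                      -- number of layers
    (φemb : EuclideanSpace ℝ (Fin d) → EuclideanSpace ℝ (Fin d'))  -- input embedding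
    (ψ : ℕ → EuclideanSpace ℝ (Fin d') → EuclideanSpace ℝ (Fin d') →
          EuclideanSpace ℝ (Fin de) → M)         -- message functions ψ^{(l)}
    (agg : Multiset M → A)                       -- permutation-invariant aggregation ⊕
    (φ : ℕ → EuclideanSpace ℝ (Fin d') → A → EuclideanSpace ℝ (Fin d'))  -- updates φ^{(l)}
    -- centralized representations h_v^{(l,cent)}
    (hcent : ℕ → V → EuclideanSpace ℝ (Fin d'))
    (hcent0 : ∀ v, hcent 0 v = φemb (x v))
    (hcentS : ∀ l v, hcent (l + 1) v =
      φ l (hcent l v)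
        (agg ((N v).val.map (fun u => ψ l (hcent l v) (hcent l u) (e u v)))))
    -- client representations h_{v,c}^{(l)}
    (hloc : ℕ → C → V → EuclideanSpace ℝ (Fin d'))
    -- initialization
    (hinit : ∀ c, ∀ v ∈ own c, hloc 0 c v = φemb (x v))
    -- (A3) layer-wise exchange
    (hexch : ∀ l c c', ∀ u ∈ rem c, u ∈ own c' → hloc l c u = hloc l c' u)
    -- (A1)–(A2) shared-parameter local update over the full neighborhood
    (hupd : ∀ l c, ∀ v ∈ own c, hloc (l + 1) c v =
      φ l (hloc l c v)
        (agg ((N v).val.map (fun u => ψ l (hloc l c v) (hloc l c u) (e u v))))) :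
    ∀ c, ∀ v ∈ own c, ∀ l ≤ L, hloc l c v = hcent l v := by
  have key : ∀ l, ∀ c, ∀ v ∈ own c, hloc l c v = hcent l v := by
    intro l
    induction l with
    | zero => intro c v hv; rw [hinit c v hv, hcent0]
    | succ l ih =>
      intro c v hv
      have hnb : ∀ u ∈ N v, hloc l c u = hcent l u := by
        intro u hu
        by_cases h : u ∈ own c
        · exact ih c u h
        · obtain ⟨c', hc'⟩ : ∃ c', u ∈ own c' := by
            have : u ∈ (⋃ c, own c) := hcover ▸ Set.mem_univ u
            simpa using this
          have hurem : u ∈ rem c := by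
            rw [hrem]
            exact ⟨Set.mem_biUnion hv (by simpa using hu), h⟩
          rw [hexch l c c' u hurem hc']
          exact ih c' u hc'
      rw [hupd l c v hv, hcentS, ih c v hv]
      refine congrArg (φ l (hcent l v)) (congrArg agg (Multiset.map_congr rfl ?_))
      intro u hu
      rw [hnb u hu]
  exact fun c v hv l _ => key l c v hv
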